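/- For any two distinct elements e and f of PG(3,2), the matroid obtained from PG(3,2) by deleting e and f is an even-cycle matroid; it is a simple even-cycle matroid of rank 4 with 13 = 4^2 - 4 + 1 elements, and is thus a largest simple even-cycle matroid of rank 4. -/

import Mathlib

open Set Matroid

noncomputable section

/-- Augmentation property for linear independence of columns. -/
theorem colIndep_aug {K V n : Type*} [Field K] [AddCommGroup V] [Module K V]
    [FiniteDimensional K V] [Finite n] (v : n → V) {I J : Set n}
    (hI : LinearIndependent K (fun i : I => v i)) (hJ : LinearIndependent K (fun i : J => v i))
    (hcard : I.ncard < J.ncard) :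
    ∃ e ∈ J, e ∉ I ∧ LinearIndependent K (fun i : ↥(insert e I) => v i) := by
  classical
  by_contra h
  push_neg at h
  have hspan : ∀ e ∈ J, v e ∈ Submodule.span K (v '' I) := by
    intro e he
    by_cases heI : e ∈ I
    · exact Submodule.subset_span ⟨e, heI, rfl⟩
    by_contra hsp
    exact h e he heI ((linearIndepOn_insert (f := v) heI).2 ⟨hI, hsp⟩)
  have hle : Submodule.span K (v '' J) ≤ Submodule.span K (v '' I) := by
    rw [Submodule.span_le]
    rintro _ ⟨e, he, rfl⟩
    exact hspan e he
  haveI : Fintype I := (Set.toFinite I).fintype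
  haveI : Fintype J := (Set.toFinite J).fintype
  have hIcard : Module.finrank K (Submodule.span K (v '' I)) = I.ncard := by
    rw [Set.image_eq_range, finrank_span_eq_card hI, Set.ncard_eq_toFinset_card',
      Set.toFinset_card]
  have hJcard : Module.finrank K (Submodule.span K (v '' J)) = J.ncard := by
    rw [Set.image_eq_range, finrank_span_eq_card hJ, Set.ncard_eq_toFinset_card',
      Set.toFinset_card]
  have := Submodule.finrank_mono (R := K) hle
  omega

/-- The column matroid of a matrix over `GF(2)`: the matroid on the columns of `A`,
where a set of columns is independent iff it is linearly independent over `GF(2)`. -/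
def colMatroid {m n : Type*} [Fintype m] [Fintype n] (A : Matrix m n (ZMod 2)) : Matroid n :=
  (IndepMatroid.ofFinite (Set.finite_univ (α := n))
    (fun I => LinearIndependent (ZMod 2) (fun i : I => A.transpose i))
    linearIndependent_empty_type
    (fun I J hJ hIJ => hJ.comp (Set.inclusion hIJ) (Set.inclusion_injective hIJ))
    (fun I J hI hJ hc => colIndep_aug A.transpose hI hJ hc)
    (fun I _ => Set.subset_univ I)).matroid

namespace Matroid

/-- Deletion of a set of elements from a matroid. -/
def del {α : Type*} (M : Matroid α) (D : Set α) : Matroid α := M ↾ (M.E \ D)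

/-- Contraction of a set of elements from a matroid, defined by duality. -/
def con {α : Type*} (M : Matroid α) (C : Set α) : Matroid α := (M✶.del C)✶

/-- Matroid isomorphism: a bijection between ground sets preserving independence. -/
def IsoTo {α β : Type*} (M : Matroid α) (N : Matroid β) : Prop :=
  ∃ φ : α → β, Set.BijOn φ M.E N.E ∧ ∀ I ⊆ M.E, (M.Indep I ↔ N.Indep (φ '' I))

/-- `M` has a minor isomorphic to `N`. -/
def HasMinorIsoTo {α β : Type*} (M : Matroid α) (N : Matroid β) : Prop :=
  ∃ C D : Set α, ((M.con C).del D).IsoTo N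

/-- A binary matroid: one isomorphic to the column matroid of a matrix over `GF(2)`. -/
def IsBinary {α : Type*} (M : Matroid α) : Prop :=
  ∃ (k l : ℕ) (A : Matrix (Fin k) (Fin l) (ZMod 2)), M.IsoTo (colMatroid A)

/-- A simple matroid: no loops and no pair of distinct parallel elements,
i.e. every subset of the ground set of size at most two is independent. -/
def IsSimple' {α : Type*} (M : Matroid α) : Prop :=
  ∀ e ∈ M.E, ∀ f ∈ M.E, M.Indep {e, f}

/-- `N` is a simplification of `M`: `N` is a simple restriction of `M` containing
an element of every parallel class of `M`. -/
def IsSimplificationOf {α : Type*} (N M : Matroid α) : Prop :=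
  ∃ S ⊆ M.E, N = M ↾ S ∧ N.IsSimple' ∧
    ∀ e ∈ M.E, M.Indep {e} → ∃ f ∈ S, e = f ∨ ¬ M.Indep {e, f}

/-- `N` is a cosimplification of `M`: the dual of `N` is a simplification of the dual of `M`. -/
def IsCosimplificationOf {α : Type*} (N M : Matroid α) : Prop :=
  N✶.IsSimplificationOf M✶

/-- A circuit: a minimal dependent set. -/
def IsCircuitOf {α : Type*} (M : Matroid α) (C : Set α) : Prop :=
  C ⊆ M.E ∧ ¬ M.Indep C ∧ ∀ D ⊂ C, M.Indep D

end Matroid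

/-- `r` is a row of `A` such that every column of `A` has at most two nonzero entries
outside row `r`. -/
def EvenCycleRep {m n : Type*} (A : Matrix m n (ZMod 2)) (r : m) : Prop :=
  ∀ j : n, ({i : m | i ≠ r ∧ A i j ≠ 0}).ncard ≤ 2

/-- An even-cycle matroid: one isomorphic to the column matroid of a `GF(2)` matrix having
a row `r` such that every column has at most two nonzero entries outside row `r`. -/
def Matroid.IsEvenCycle {α : Type*} (M : Matroid α) : Prop :=
  ∃ (k l : ℕ) (A : Matrix (Fin k) (Fin l) (ZMod 2)) (r : Fin k),
    EvenCycleRep A r ∧ M.IsoTo (colMatroid A)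

/-- Every column of `A` has at most two nonzero entries. -/
def GraphicRep {m n : Type*} (A : Matrix m n (ZMod 2)) : Prop :=
  ∀ j : n, ({i : m | A i j ≠ 0}).ncard ≤ 2

/-- A graphic matroid: one isomorphic to the column matroid of a `GF(2)` matrix in which
every column has at most two nonzero entries. -/
def Matroid.IsGraphic {α : Type*} (M : Matroid α) : Prop :=
  ∃ (k l : ℕ) (A : Matrix (Fin k) (Fin l) (ZMod 2)),
    GraphicRep A ∧ M.IsoTo (colMatroid A)

/-- A cographic matroid: the dual of a graphic matroid. -/
def Matroid.IsCographic {α : Type*} (M : Matroid α) : Prop := M✶.IsGraphic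

/-- An even-cut matroid: one isomorphic to the column matroid of a `GF(2)` matrix `A` having a
row `r` such that the column matroid of the matrix obtained by deleting row `r` is cographic. -/
def Matroid.IsEvenCut {α : Type*} (M : Matroid α) : Prop :=
  ∃ (k l : ℕ) (A : Matrix (Fin k) (Fin l) (ZMod 2)) (r : Fin k),
    (colMatroid (A.submatrix (Subtype.val : {i : Fin k // i ≠ r} → Fin k) id)).IsCographic ∧
    M.IsoTo (colMatroid A)

/-- `r₁, r₂` are rows of `A` such that every column of `A` either has at most one nonzero entry
outside rows `r₁, r₂`, or has exactly two nonzero entries outside rows `r₁, r₂` and is zero in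
both rows `r₁` and `r₂`. -/
def BlockingPairRep {m n : Type*} (A : Matrix m n (ZMod 2)) (r₁ r₂ : m) : Prop :=
  ∀ j : n, ({i : m | i ≠ r₁ ∧ i ≠ r₂ ∧ A i j ≠ 0}).ncard ≤ 1 ∨
    (({i : m | i ≠ r₁ ∧ i ≠ r₂ ∧ A i j ≠ 0}).ncard = 2 ∧ A r₁ j = 0 ∧ A r₂ j = 0)

/-- An even-cycle matroid with a blocking pair. -/
def Matroid.IsEvenCycleBP {α : Type*} (M : Matroid α) : Prop :=
  ∃ (k l : ℕ) (A : Matrix (Fin k) (Fin l) (ZMod 2)) (r₁ r₂ : Fin k), r₁ ≠ r₂ ∧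
    BlockingPairRep A r₁ r₂ ∧ M.IsoTo (colMatroid A)

/-- `N` is an excluded minor for the class of matroids satisfying `P`. -/
def IsExcludedMinorFor {α : Type*} (N : Matroid α) (P : Matroid α → Prop) : Prop :=
  ¬ P N ∧ ∀ e ∈ N.E, P (N.del {e}) ∧ P (N.con {e})

/-- The points of the binary projective space `PG(3,2)`: nonzero vectors of `GF(2)^4`. -/
abbrev PGIdx : Type := {v : Fin 4 → ZMod 2 // v ≠ 0}

/-- The matrix whose columns are the 15 nonzero vectors of `GF(2)^4`. -/
def PGMatrix : Matrix (Fin 4) PGIdx (ZMod 2) := fun i v => v.1 i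

/-- The binary projective geometry `PG(3,2)`. -/
def PG32 : Matroid PGIdx := colMatroid PGMatrix

/-- The vertex-edge incidence matrix of a simple graph on vertex set `V` whose edges are a
set of pairs `(u, w)` with `u < w`. -/
def incMatrix {k : ℕ} (E : Type*) (val : E → Fin k × Fin k) :
    Matrix (Fin k) E (ZMod 2) :=
  fun i e => if i = (val e).1 ∨ i = (val e).2 then 1 else 0

/-- Edges of `K7` minus two adjacent edges. -/
abbrev L19Edge : Type := {p : Fin 7 × Fin 7 // p.1 < p.2 ∧ p ≠ (0, 1) ∧ p ≠ (0, 2)}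

/-- `L19`: the dual of the cycle matroid of `K7` minus two adjacent edges. -/
def L19 : Matroid L19Edge := (colMatroid (incMatrix L19Edge Subtype.val))✶

/-- The matroid `L11`. -/
def L11 : Matroid (Fin 11) :=
  colMatroid (!![1,0,0,0,0,0,1,0,1,0,1;
                 0,1,0,0,0,0,1,0,0,1,1;
                 0,0,1,0,0,0,0,1,1,1,0;
                 0,0,0,1,0,0,0,1,1,0,1;
                 0,0,0,0,1,0,0,1,0,1,1;
                 0,0,0,0,0,1,0,0,1,1,1] : Matrix (Fin 6) (Fin 11) (ZMod 2))

/-- Edges of the complete graph `K6`. -/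
abbrev K6Edge : Type := {p : Fin 6 × Fin 6 // p.1 < p.2}

/-- The cycle matroid `M(K6)`. -/
def MK6 : Matroid K6Edge := colMatroid (incMatrix K6Edge Subtype.val)

/-- Edges of `K6` minus an edge. -/
abbrev K6eEdge : Type := {p : Fin 6 × Fin 6 // p.1 < p.2 ∧ p ≠ (0, 1)}

/-- The cycle matroid `M(K6 \ e)`. -/
def MK6e : Matroid K6eEdge := colMatroid (incMatrix K6eEdge Subtype.val)

/-- Edges of the complete graph `K5`. -/
abbrev K5Edge : Type := {p : Fin 5 × Fin 5 // p.1 < p.2}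

/-- The cycle matroid `M(K5)`. -/
def MK5 : Matroid K5Edge := colMatroid (incMatrix K5Edge Subtype.val)

/-- The matroid `H12`. -/
def H12 : Matroid (Fin 12) :=
  colMatroid (!![1,0,1,0,1,0,1,0,1,0,1,0;
                 0,0,0,0,1,1,1,1,0,0,0,0;
                 0,0,0,0,1,1,0,0,1,1,0,0;
                 1,1,0,0,0,0,0,0,0,0,1,1;
                 0,0,1,1,0,0,1,1,0,0,1,1] : Matrix (Fin 5) (Fin 12) (ZMod 2))

end

/-!
A linear automorphism of `GF(2)^4` sends `e` and `f` to `0111` and `1111`, the only two points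
of `PG(3,2)` with three nonzero coordinates off coordinate `0`; the thirteen remaining points are
therefore the columns of an even-cycle representation with special row `0`.

Conversely, let `A` represent `M` with special row `r`, and write each column of `A` as `C x` with
`x ≠ 0`, where `C` consists of the four columns of a base. Since `C` is injective, deleting row `r`
from `C` drops the rank by at most one, so three rows of `C` off row `r` are independent and two
distinct vectors `x` take the value `1` on all three of them. For these two `x` the vector `C x`
has three nonzero entries off row `r`; together with `0` they are three of the sixteen vectors
of `GF(2)^4` that correspond to no column of `A`, so `A` has at most `13` columns.
-/

namespace Matroid

variable {α β : Type*} {M : Matroid α} {N : Matroid β}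

lemma IsoTo.exists_eq_map (h : M.IsoTo N) :
    ∃ (φ : α → β) (hφ : InjOn φ M.E), N = M.map φ hφ := by
  obtain ⟨φ, hbij, hind⟩ := h
  refine ⟨φ, hbij.injOn, ext_indep hbij.image_eq.symm fun I hI => ?_⟩
  rw [map_indep_iff]
  constructor
  · intro hI'
    have himage : φ '' (φ ⁻¹' I ∩ M.E) = I := by
      rw [image_preimage_inter, inter_eq_left.2 (hI.trans hbij.image_eq.symm.subset)]
    exact ⟨_, (hind _ inter_subset_right).2 (himage.symm ▸ hI'), himage.symm⟩
  · rintro ⟨I₀, hI₀, rfl⟩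
    exact (hind I₀ hI₀.subset_ground).1 hI₀

lemma IsoTo.isSimple' (h : M.IsoTo N) (hM : M.IsSimple') : N.IsSimple' := by
  obtain ⟨φ, hφ, rfl⟩ := h.exists_eq_map
  rintro _ ⟨x, hx, rfl⟩ _ ⟨y, hy, rfl⟩
  simpa [image_pair] using (hM x hx y hy).map φ hφ

lemma IsSimple'.restrict (hM : M.IsSimple') {S : Set α} (hS : S ⊆ M.E) : (M ↾ S).IsSimple' :=
  fun e he f hf => restrict_indep_iff.2 ⟨hM e (hS he) f (hS hf), pair_subset he hf⟩

end Matroid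

lemma ZMod.eq_zero_or_eq_one : ∀ c : ZMod 2, c = 0 ∨ c = 1 := by decide

section ColMatroid

variable {m n : Type*} [Fintype m] [Fintype n] (A : Matrix m n (ZMod 2))

@[simp] lemma colMatroid_ground : (colMatroid A).E = univ := rfl

@[simp] lemma colMatroid_indep_iff {I : Set n} :
    (colMatroid A).Indep I ↔ LinearIndepOn (ZMod 2) A.col I := by
  simp [colMatroid, LinearIndepOn, Matrix.col]

lemma colMatroid_isSimple'_iff :
    (colMatroid A).IsSimple' ↔ Function.Injective A.col ∧ ∀ j, A.col j ≠ 0 := by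
  simp only [IsSimple', colMatroid_ground, mem_univ, colMatroid_indep_iff, forall_const]
  constructor
  · intro h
    have hne : ∀ j, A.col j ≠ 0 := fun j => by
      simpa [linearIndepOn_singleton_iff] using h j j
    refine ⟨fun i j hij => by_contra fun hne' => ?_, hne⟩
    simpa [hij] using (linearIndepOn_pair_iff _ hne' (hne i)).1 (h i j) 1
  · rintro ⟨hinj, hne⟩ i j
    obtain rfl | hij := eq_or_ne i j
    · simpa [linearIndepOn_singleton_iff] using hne i
    refine (linearIndepOn_pair_iff _ hij (hne i)).2 fun c => ?_
    obtain rfl | rfl := ZMod.eq_zero_or_eq_one c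
    · simpa using (hne j).symm
    · simpa using hinj.ne hij

lemma restrict_colMatroid_isBase_iff {S B : Set n} :
    (colMatroid A ↾ S).IsBase B ↔ B ⊆ S ∧ LinearIndepOn (ZMod 2) A.col B ∧
      ∀ j ∈ S, A.col j ∈ Submodule.span (ZMod 2) (A.col '' B) := by
  constructor
  · intro hB
    have hBS : B ⊆ S := hB.subset_ground
    have hind : LinearIndepOn (ZMod 2) A.col B := by
      simpa using (restrict_indep_iff.1 hB.indep).1
    refine ⟨hBS, hind, fun j hj => by_contra fun hspan => ?_⟩
    have hjB : j ∉ B := fun hjB => hspan (Submodule.subset_span (mem_image_of_mem _ hjB))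
    refine (hB.insert_dep ⟨hj, hjB⟩).not_indep
      (restrict_indep_iff.2 ⟨?_, insert_subset hj hBS⟩)
    simpa using (linearIndepOn_insert hjB).2 ⟨hind, hspan⟩
  · rintro ⟨hBS, hind, hspan⟩
    refine Indep.isBase_of_forall_insert (restrict_indep_iff.2 ⟨by simpa using hind, hBS⟩) ?_
    rintro j ⟨hj, hjB⟩ hins
    have := (restrict_indep_iff.1 hins).1
    rw [colMatroid_indep_iff, linearIndepOn_insert hjB] at this
    exact this.2 (hspan j hj)

lemma restrict_colMatroid_isoTo {m' n' : Type*} [Fintype m'] [Fintype n'] [Nonempty n']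
    {A' : Matrix m' n' (ZMod 2)} {S : Set n} (T : (m → ZMod 2) ≃ₗ[ZMod 2] (m' → ZMod 2))
    (φ : S ≃ n') (hφ : ∀ j : S, A'.col (φ j) = T (A.col j)) :
    (colMatroid A ↾ S).IsoTo (colMatroid A') := by
  classical
  let ψ : n → n' := fun j => if h : j ∈ S then φ ⟨j, h⟩ else Classical.arbitrary n'
  have hψ : ∀ j (h : j ∈ S), ψ j = φ ⟨j, h⟩ := fun j h => dif_pos h
  have hinj : InjOn ψ S := fun i hi j hj h => by
    simpa using φ.injective ((hψ i hi).symm.trans (h.trans (hψ j hj)))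
  refine ⟨ψ, ⟨fun _ _ => mem_univ _, hinj, fun y _ => ?_⟩, fun I hI => ?_⟩
  · exact ⟨φ.symm y, (φ.symm y).2, by simp [hψ]⟩
  have hcol : EqOn (A'.col ∘ ψ) (T ∘ A.col) I := fun j hj => by
    simp [hψ j (hI hj), ← hφ ⟨j, hI hj⟩]
  rw [restrict_indep_iff, colMatroid_indep_iff, colMatroid_indep_iff,
    and_iff_left (show I ⊆ S from hI),
    ← T.toLinearMap.linearIndepOn_iff_of_injOn T.injective.injOn]
  exact ⟨fun h => ((linearIndepOn_congr hcol).2 h).image_of_comp,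
    fun h => (linearIndepOn_congr hcol).1 (h.comp_of_image (hinj.mono hI))⟩

end ColMatroid

section MatrixRank

open Matrix

variable {K m n : Type*} [Field K] [Fintype n]

lemma Matrix.exists_linearIndependent_rows [Fintype m] (A : Matrix m n K) {k : ℕ}
    (hk : k ≤ A.rank) :
    ∃ s : Fin k → m, LinearIndependent K (A.row ∘ s) := by
  classical
  obtain ⟨κ, a, ha, hspan, hli⟩ := exists_linearIndependent' K A.row
  have : Fintype κ := Fintype.ofInjective a ha
  have hκ : k ≤ Fintype.card κ := by
    rwa [← finrank_span_eq_card hli, hspan, ← A.rank_eq_finrank_span_row]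
  obtain ⟨e⟩ :=
    Function.Embedding.nonempty_of_card_le (by simpa using hκ : Fintype.card (Fin k) ≤ _)
  exact ⟨a ∘ e, hli.comp e e.injective⟩

lemma Matrix.card_le_rank_deleteRow_add_one (C : Matrix m n K)
    (hC : LinearIndependent K C.col) (r : m) :
    Fintype.card n ≤ (C.submatrix (Subtype.val : {i // i ≠ r} → m) id).rank + 1 := by
  set C' := C.submatrix (Subtype.val : {i // i ≠ r} → m) id
  -- the kernel of `C'` has dimension at most one: it embeds into `K` via `x ↦ (C *ᵥ x) r`
  let f : LinearMap.ker C'.mulVecLin →ₗ[K] K :=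
    (LinearMap.proj r).comp (C.mulVecLin.comp (LinearMap.ker C'.mulVecLin).subtype)
  have hf : Function.Injective f := by
    rw [← LinearMap.ker_eq_bot, LinearMap.ker_eq_bot']
    rintro ⟨x, hx⟩ hfx
    have hCx : C *ᵥ x = 0 := funext fun i => by
      obtain rfl | hi := eq_or_ne i r
      · exact hfx
      · exact congrFun (LinearMap.mem_ker.1 hx) ⟨i, hi⟩
    exact Subtype.ext (Matrix.mulVec_injective_iff.2 hC (hCx.trans (Matrix.mulVec_zero C).symm))
  have := LinearMap.finrank_le_finrank_of_injective hf
  have := LinearMap.finrank_range_add_finrank_ker C'.mulVecLin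
  simp only [Module.finrank_self, Module.finrank_fintype_fun_eq_card] at *
  rw [Matrix.rank]
  omega

lemma Matrix.exists_ne_mulVec_eq {κ : Type*} [Fintype κ] (G : Matrix κ n K)
    (hG : LinearIndependent K G.row) (hcard : Fintype.card κ < Fintype.card n) (y : κ → K) :
    ∃ x x', x ≠ x' ∧ G *ᵥ x = y ∧ G *ᵥ x' = y := by
  have hsurj : Function.Surjective G.mulVecLin := by
    rw [← LinearMap.range_eq_top]
    apply Submodule.eq_top_of_finrank_eq
    rw [← Matrix.rank, hG.rank_matrix, Module.finrank_fintype_fun_eq_card]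
  obtain ⟨x, hx⟩ := hsurj y
  have hninj : ¬ Function.Injective G.mulVecLin := fun hinj => by
    have := LinearMap.finrank_le_finrank_of_injective hinj
    simp only [Module.finrank_fintype_fun_eq_card] at this
    omega
  obtain ⟨z₁, z₂, hz, hne⟩ : ∃ z₁ z₂, G *ᵥ z₁ = G *ᵥ z₂ ∧ z₁ ≠ z₂ := by
    simpa [Function.Injective] using hninj
  refine ⟨x, x + (z₁ - z₂), by simpa [sub_eq_zero] using hne, hx, ?_⟩
  simp [Matrix.mulVec_add, Matrix.mulVec_sub, hz, ← hx]

end MatrixRank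

noncomputable def weightOff {m K : Type*} [Zero K] (r : m) (v : m → K) : ℕ :=
  {i | i ≠ r ∧ v i ≠ 0}.ncard

section EvenCycleBound

open Matrix

variable {K m n ι : Type*} [Field K] [Fintype m] [Fintype n] [Fintype ι]

lemma Matrix.exists_ne_two_lt_weightOff [DecidableEq m] (C : Matrix m ι K)
    (hC : LinearIndependent K C.col) (hι : 4 ≤ Fintype.card ι) (r : m) :
    ∃ x x', x ≠ x' ∧ 2 < weightOff r (C *ᵥ x) ∧ 2 < weightOff r (C *ᵥ x') := by
  have hrank := C.card_le_rank_deleteRow_add_one hC r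
  set C' := C.submatrix (Subtype.val : {i // i ≠ r} → m) id
  obtain ⟨s, hs⟩ := C'.exists_linearIndependent_rows (k := 3) (by omega)
  obtain ⟨x, x', hne, hx, hx'⟩ :=
    (C'.submatrix s id).exists_ne_mulVec_eq hs (by simp only [Fintype.card_fin]; omega) 1
  have heavy : ∀ y, C'.submatrix s id *ᵥ y = 1 → 2 < weightOff r (C *ᵥ y) := by
    intro y hy
    have hsub : range (Subtype.val ∘ s) ⊆ {i | i ≠ r ∧ (C *ᵥ y) i ≠ 0} := by
      rintro _ ⟨j, rfl⟩
      have h : (C *ᵥ y) (s j) = 1 := congrFun hy j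
      exact ⟨(s j).2, by simp [h]⟩
    calc 2 < (range (Subtype.val ∘ s)).ncard := by
          rw [ncard_range_of_injective (Subtype.val_injective.comp hs.injective.of_comp)]
          simp
      _ ≤ weightOff r (C *ᵥ y) := ncard_le_ncard hsub (toFinite _)
  exact ⟨x, x', hne, heavy x hx, heavy x' hx'⟩

lemma EvenCycleRep.card_le_thirteen {A : Matrix m n (ZMod 2)} {r : m}
    (hA : EvenCycleRep A r) (hinj : Function.Injective A.col) (hne : ∀ j, A.col j ≠ 0)
    (C : Matrix m ι (ZMod 2)) (hC : LinearIndependent (ZMod 2) C.col) (hι : Fintype.card ι = 4)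
    (hspan : ∀ j, A.col j ∈ Submodule.span (ZMod 2) (range C.col)) :
    Fintype.card n ≤ 13 := by
  classical
  obtain ⟨x, x', hxx', hx, hx'⟩ := C.exists_ne_two_lt_weightOff hC hι.ge r
  choose σ hσ using fun j =>
    (C.range_mulVecLin ▸ hspan j : A.col j ∈ LinearMap.range C.mulVecLin)
  have hσinj : Function.Injective σ := fun j j' h => hinj (by rw [← hσ j, ← hσ j', h])
  have hweight : ∀ j, weightOff r (C *ᵥ σ j) ≤ 2 := fun j => by
    rw [← Matrix.mulVecLin_apply, hσ j]; exact hA j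
  have hx0 : 0 ≠ x := by rintro rfl; simp [weightOff] at hx
  have hx'0 : 0 ≠ x' := by rintro rfl; simp [weightOff] at hx'
  have hmaps : ∀ j, σ j ∈ ({0, x, x'} : Finset (ι → ZMod 2))ᶜ := fun j => by
    have h0 : σ j ≠ 0 := fun h => hne j (by rw [← hσ j, h, map_zero])
    have h1 : σ j ≠ x := fun h => by have := hweight j; rw [h] at this; omega
    have h2 : σ j ≠ x' := fun h => by have := hweight j; rw [h] at this; omega
    simp [h0, h1, h2]
  have := Finset.card_le_card_of_injOn σ (s := Finset.univ) (fun j _ => hmaps j) hσinj.injOn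
  rw [Finset.card_univ, Finset.card_compl,
    Finset.card_eq_three.2 ⟨_, _, _, hx0, hx'0, hxx', rfl⟩, Fintype.card_fun, ZMod.card, hι] at this
  simpa using this

end EvenCycleBound

theorem Matroid.IsEvenCycle.ncard_le_thirteen {β : Type*} {M : Matroid β} (hM : M.IsEvenCycle)
    (hs : M.IsSimple') (hB : ∃ B, M.IsBase B ∧ B.ncard = 4) : M.E.ncard ≤ 13 := by
  classical
  obtain ⟨k, l, A, r, hA, hiso⟩ := hM
  obtain ⟨φ, hφ, hN⟩ := hiso.exists_eq_map
  obtain ⟨B, hB, hB4⟩ := hB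
  obtain ⟨hinj, hne⟩ := (colMatroid_isSimple'_iff A).1 (hiso.isSimple' hs)
  have hbase : (colMatroid A ↾ univ).IsBase (φ '' B) := by
    rw [← colMatroid_ground A, restrict_ground_eq_self, hN]
    exact hB.map hφ
  obtain ⟨-, hind, hspan⟩ := (restrict_colMatroid_isBase_iff A).1 hbase
  have hcard : Fintype.card ↥(φ '' B) = 4 := by
    rw [← Nat.card_eq_fintype_card, Nat.card_coe_set_eq, (hφ.mono hB.subset_ground).ncard_image,
      hB4]
  have hl := hA.card_le_thirteen hinj hne (A.submatrix id (Subtype.val : φ '' B → Fin l)) hind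
    hcard fun j => by
      have h := hspan j (mem_univ j)
      rw [image_eq_range] at h
      exact h
  have hE : φ '' M.E = univ := by rw [← map_ground M φ hφ, ← hN, colMatroid_ground]
  rw [← hφ.ncard_image, hE, ncard_univ, Nat.card_eq_fintype_card]
  simpa using hl

section PG32

lemma ZMod.linearIndependent_pair_of_ne {V : Type*} [AddCommGroup V] [Module (ZMod 2) V] {a b : V}
    (ha : a ≠ 0) (hb : b ≠ 0) (hab : a ≠ b) : LinearIndependent (ZMod 2) ![a, b] := by
  refine (LinearIndependent.pair_iff' ha).2 fun c => ?_
  obtain rfl | rfl := ZMod.eq_zero_or_eq_one c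
  · simpa using hb.symm
  · simpa using hab

lemma exists_linearEquiv_comp_eq {K V ι : Type*} [Field K] [AddCommGroup V] [Module K V]
    [FiniteDimensional K V] {v w : ι → V} (hv : LinearIndependent K v)
    (hw : LinearIndependent K w) : ∃ T : V ≃ₗ[K] V, ∀ i, T (v i) = w i := by
  obtain ⟨T, hT⟩ := Submodule.exists_linearEquiv_restrict_eq
    ((Module.Basis.span hv).equiv (Module.Basis.span hw) (Equiv.refl ι))
  refine ⟨T, fun i => ?_⟩
  have := hT ⟨v i, Submodule.subset_span (mem_range_self i)⟩
  rw [← Module.Basis.span_apply hv i, Module.Basis.equiv_apply] at this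
  simpa using this.symm

abbrev PG32Light : Type := {p : PGIdx // p.1 ≠ ![0, 1, 1, 1] ∧ p.1 ≠ ![1, 1, 1, 1]}

lemma card_PG32Light : Fintype.card PG32Light = 13 := by decide

lemma PG32Light.weightOff_le_two (p : PG32Light) : weightOff 0 p.1.1 ≤ 2 := by
  suffices ∀ v : Fin 4 → ZMod 2, v ≠ ![0, 1, 1, 1] → v ≠ ![1, 1, 1, 1] →
      (Finset.univ.filter fun i => i ≠ 0 ∧ v i ≠ 0).card ≤ 2 by
    rw [weightOff, ncard_eq_toFinset_card', toFinset_ofPred]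
    exact this _ p.2.1 p.2.2
  decide

noncomputable def PG32LightMatrix : Matrix (Fin 4) (Fin 13) (ZMod 2) :=
  Matrix.of fun i k => ((Fintype.equivFinOfCardEq card_PG32Light).symm k).1.1 i

lemma evenCycleRep_PG32LightMatrix : EvenCycleRep PG32LightMatrix 0 :=
  fun _ => PG32Light.weightOff_le_two _

lemma PG32_isSimple' : PG32.IsSimple' :=
  (colMatroid_isSimple'_iff PGMatrix).2 ⟨Subtype.val_injective, fun p => p.2⟩

lemma ncard_ground_PG32_del {e f : PGIdx} (hef : e ≠ f) : (PG32.del {e, f}).E.ncard = 13 := by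
  have : Nat.card PGIdx = 15 := by rw [Nat.card_eq_fintype_card]; decide
  rw [Matroid.del, restrict_ground_eq, PG32, colMatroid_ground, ncard_sdiff (subset_univ _),
    ncard_univ, this, ncard_pair hef]

lemma PGIdx.exists_linearEquiv_map_pair {e f : PGIdx} (hef : e ≠ f) :
    ∃ T : (Fin 4 → ZMod 2) ≃ₗ[ZMod 2] (Fin 4 → ZMod 2),
      T e.1 = ![0, 1, 1, 1] ∧ T f.1 = ![1, 1, 1, 1] := by
  obtain ⟨T, hT⟩ := exists_linearEquiv_comp_eq
    (ZMod.linearIndependent_pair_of_ne e.2 f.2 (Subtype.val_injective.ne hef))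
    (ZMod.linearIndependent_pair_of_ne (a := ![0, 1, 1, 1]) (b := ![1, 1, 1, 1])
      (by decide) (by decide) (by decide))
  exact ⟨T, hT 0, hT 1⟩

variable {e f : PGIdx} {T : (Fin 4 → ZMod 2) ≃ₗ[ZMod 2] (Fin 4 → ZMod 2)}

lemma mem_ground_PG32_del_iff (hTe : T e.1 = ![0, 1, 1, 1]) (hTf : T f.1 = ![1, 1, 1, 1])
    (p : PGIdx) :
    p ∈ (PG32.del {e, f}).E ↔ T p.1 ≠ ![0, 1, 1, 1] ∧ T p.1 ≠ ![1, 1, 1, 1] := by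
  rw [← hTe, ← hTf]
  simp [Matroid.del, PG32, T.injective.eq_iff, Subtype.ext_iff]

lemma PG32_del_isoTo (hTe : T e.1 = ![0, 1, 1, 1]) (hTf : T f.1 = ![1, 1, 1, 1]) :
    (PG32.del {e, f}).IsoTo (colMatroid PG32LightMatrix) := by
  let τ : PGIdx ≃ PGIdx := T.toEquiv.subtypeEquiv fun v => by simp
  let φ : ↥(PG32.E \ {e, f}) ≃ Fin 13 :=
    (τ.subtypeEquiv (mem_ground_PG32_del_iff hTe hTf)).trans
      (Fintype.equivFinOfCardEq card_PG32Light)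
  exact restrict_colMatroid_isoTo PGMatrix T φ fun p => by
    ext i
    rw [PG32LightMatrix, Matrix.col_apply, Matrix.of_apply, Equiv.trans_apply,
      Equiv.symm_apply_apply]
    rfl

lemma PG32_del_exists_isBase (hTe : T e.1 = ![0, 1, 1, 1]) (hTf : T f.1 = ![1, 1, 1, 1]) :
    ∃ B, (PG32.del {e, f}).IsBase B ∧ B.ncard = 4 := by
  let b := (Pi.basisFun (ZMod 2) (Fin 4)).map T.symm
  let g : Fin 4 → PGIdx := fun i => ⟨b i, b.ne_zero i⟩
  have hg : Function.Injective g := fun i j h => b.injective (congrArg Subtype.val h)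
  refine ⟨range g, (restrict_colMatroid_isBase_iff PGMatrix).2 ⟨?_, ?_, ?_⟩, ?_⟩
  · rintro _ ⟨i, rfl⟩
    refine (mem_ground_PG32_del_iff hTe hTf _).2 ?_
    have : ∀ i : Fin 4, (Pi.single i 1 : Fin 4 → ZMod 2) ≠ ![0, 1, 1, 1] ∧
        (Pi.single i 1 : Fin 4 → ZMod 2) ≠ ![1, 1, 1, 1] := by decide
    simpa [g, b] using this i
  · exact (linearIndepOn_range_iff hg _).2 b.linearIndependent
  · intro j _
    rw [← range_comp]
    exact (b.span_eq ▸ Submodule.mem_top : PGMatrix.col j ∈ Submodule.span (ZMod 2) (range b))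
  · rw [ncard_range_of_injective hg, Nat.card_eq_fintype_card, Fintype.card_fin]

end PG32

/-- Deleting any two distinct elements from `PG(3,2)` yields a simple even-cycle matroid of
rank 4 with `13 = 4^2 - 4 + 1` elements, which is thus a largest simple even-cycle matroid of
rank 4. -/
theorem pg32_delete_two_largest_evenCycle (e f : PGIdx) (hef : e ≠ f) :
    (PG32.del {e, f}).IsEvenCycle ∧ (PG32.del {e, f}).IsSimple' ∧
      (∃ B, (PG32.del {e, f}).IsBase B ∧ B.ncard = 4) ∧
      (PG32.del {e, f}).E.ncard = 4 ^ 2 - 4 + 1 ∧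
      ∀ {β : Type*} (M : Matroid β), M.IsEvenCycle → M.IsSimple' →
        (∃ B, M.IsBase B ∧ B.ncard = 4) → M.E.ncard ≤ 4 ^ 2 - 4 + 1 := by
  obtain ⟨T, hTe, hTf⟩ := PGIdx.exists_linearEquiv_map_pair hef
  exact ⟨⟨4, 13, PG32LightMatrix, 0, evenCycleRep_PG32LightMatrix, PG32_del_isoTo hTe hTf⟩,
    PG32_isSimple'.restrict sdiff_subset, PG32_del_exists_isBase hTe hTf, ncard_ground_PG32_del hef,
    fun M hM hs hB => hM.ncard_le_thirteen hs hB⟩
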